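/- The image of G_{n,P}^2 under the homomorphism η (sending a_{ij}^0 ↦ a_{ij} and a_{ij}^1 ↦ τ_i a_{ij} τ_i) is isomorphic to the subgroup H_{n,D}^2 of G_{n,D}^2; in particular η maps G_{n,P}^2 onto H_{n,D}^2 with inverse χ, i.e., χ ∘ η = id and η ∘ χ = id. -/

import Mathlib

/-- Index type for the generators `a_{ij}`: two-element subsets of `Fin n`. -/
abbrev PairIdx (n : ℕ) := {s : Finset (Fin n) // s.card = 2}

/-- The unordered pair `{i,j}` as an index. -/
def mkPair {n : ℕ} (i j : Fin n) (h : i ≠ j) : PairIdx n := ⟨{i, j}, Finset.card_pair h⟩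

/-- Relations of the group `G_n^2`. -/
def gn2Rels (n : ℕ) : Set (FreeGroup (PairIdx n)) :=
  {r | (∃ (i j : Fin n) (h : i ≠ j),
          r = FreeGroup.of (mkPair i j h) * FreeGroup.of (mkPair i j h)) ∨
       (∃ (i j k l : Fin n) (hij : i ≠ j) (hkl : k ≠ l),
          i ≠ k ∧ i ≠ l ∧ j ≠ k ∧ j ≠ l ∧
          r = FreeGroup.of (mkPair i j hij) * FreeGroup.of (mkPair k l hkl) *
              (FreeGroup.of (mkPair i j hij))⁻¹ * (FreeGroup.of (mkPair k l hkl))⁻¹) ∨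
       (∃ (i j k : Fin n) (hij : i ≠ j) (hik : i ≠ k) (hjk : j ≠ k),
          r = FreeGroup.of (mkPair i j hij) * FreeGroup.of (mkPair i k hik) *
              FreeGroup.of (mkPair j k hjk) *
              (FreeGroup.of (mkPair j k hjk) * FreeGroup.of (mkPair i k hik) *
               FreeGroup.of (mkPair i j hij))⁻¹)}

/-- The group `G_n^2`. -/
abbrev Gn2 (n : ℕ) := PresentedGroup (gn2Rels n)

/-- The generator `a_{ij}` of `G_n^2`. -/
def A2 {n : ℕ} (i j : Fin n) (h : i ≠ j) : Gn2 n := PresentedGroup.of (mkPair i j h)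

/-- Relations of the group `G_{n,P}^2` (`G_n^2` with parity). -/
def gnP2Rels (n : ℕ) : Set (FreeGroup (PairIdx n × ZMod 2)) :=
  {r | (∃ (i j : Fin n) (h : i ≠ j) (ε : ZMod 2),
          r = FreeGroup.of (mkPair i j h, ε) * FreeGroup.of (mkPair i j h, ε)) ∨
       (∃ (i j k l : Fin n) (hij : i ≠ j) (hkl : k ≠ l) (ε₁ ε₂ : ZMod 2),
          i ≠ k ∧ i ≠ l ∧ j ≠ k ∧ j ≠ l ∧
          r = FreeGroup.of (mkPair i j hij, ε₁) * FreeGroup.of (mkPair k l hkl, ε₂) *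
              (FreeGroup.of (mkPair i j hij, ε₁))⁻¹ * (FreeGroup.of (mkPair k l hkl, ε₂))⁻¹) ∨
       (∃ (i j k : Fin n) (hij : i ≠ j) (hik : i ≠ k) (hjk : j ≠ k)
          (εij εik εjk : ZMod 2), εij + εik + εjk = 0 ∧
          r = FreeGroup.of (mkPair i j hij, εij) * FreeGroup.of (mkPair i k hik, εik) *
              FreeGroup.of (mkPair j k hjk, εjk) *
              (FreeGroup.of (mkPair j k hjk, εjk) * FreeGroup.of (mkPair i k hik, εik) *
               FreeGroup.of (mkPair i j hij, εij))⁻¹)}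

/-- The group `G_{n,P}^2`. -/
abbrev GnP2 (n : ℕ) := PresentedGroup (gnP2Rels n)

/-- The generator `a_{ij}^ε` of `G_{n,P}^2`. -/
def AP {n : ℕ} (i j : Fin n) (h : i ≠ j) (ε : ZMod 2) : GnP2 n :=
  PresentedGroup.of (mkPair i j h, ε)

/-- Alphabet of `G_{n,D}^2`: crossing generators `a_{ij}` and point generators `τ_i`. -/
abbrev DIdx (n : ℕ) := PairIdx n ⊕ Fin n

/-- Relations of the group `G_{n,D}^2` (`G_n^2` with points). -/
def gnD2Rels (n : ℕ) : Set (FreeGroup (DIdx n)) :=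
  {r | (∃ (i j : Fin n) (h : i ≠ j),
          r = FreeGroup.of (Sum.inl (mkPair i j h) : DIdx n) *
              FreeGroup.of (Sum.inl (mkPair i j h) : DIdx n)) ∨
       (∃ (i j k l : Fin n) (hij : i ≠ j) (hkl : k ≠ l),
          i ≠ k ∧ i ≠ l ∧ j ≠ k ∧ j ≠ l ∧
          r = FreeGroup.of (Sum.inl (mkPair i j hij) : DIdx n) *
              FreeGroup.of (Sum.inl (mkPair k l hkl) : DIdx n) *
              (FreeGroup.of (Sum.inl (mkPair i j hij) : DIdx n))⁻¹ *
              (FreeGroup.of (Sum.inl (mkPair k l hkl) : DIdx n))⁻¹) ∨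
       (∃ (i j k : Fin n) (hij : i ≠ j) (hik : i ≠ k) (hjk : j ≠ k),
          r = FreeGroup.of (Sum.inl (mkPair i j hij) : DIdx n) *
              FreeGroup.of (Sum.inl (mkPair i k hik) : DIdx n) *
              FreeGroup.of (Sum.inl (mkPair j k hjk) : DIdx n) *
              (FreeGroup.of (Sum.inl (mkPair j k hjk) : DIdx n) *
               FreeGroup.of (Sum.inl (mkPair i k hik) : DIdx n) *
               FreeGroup.of (Sum.inl (mkPair i j hij) : DIdx n))⁻¹) ∨
       (∃ i : Fin n,
          r = FreeGroup.of (Sum.inr i : DIdx n) * FreeGroup.of (Sum.inr i : DIdx n)) ∨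
       (∃ i j : Fin n,
          r = FreeGroup.of (Sum.inr i : DIdx n) * FreeGroup.of (Sum.inr j : DIdx n) *
              (FreeGroup.of (Sum.inr i : DIdx n))⁻¹ * (FreeGroup.of (Sum.inr j : DIdx n))⁻¹) ∨
       (∃ (i j : Fin n) (h : i ≠ j),
          r = FreeGroup.of (Sum.inr i : DIdx n) * FreeGroup.of (Sum.inr j : DIdx n) *
              FreeGroup.of (Sum.inl (mkPair i j h) : DIdx n) *
              FreeGroup.of (Sum.inr j : DIdx n) * FreeGroup.of (Sum.inr i : DIdx n) *
              (FreeGroup.of (Sum.inl (mkPair i j h) : DIdx n))⁻¹) ∨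
       (∃ (i j k : Fin n) (h : i ≠ j), k ≠ i ∧ k ≠ j ∧
          r = FreeGroup.of (Sum.inl (mkPair i j h) : DIdx n) *
              FreeGroup.of (Sum.inr k : DIdx n) *
              (FreeGroup.of (Sum.inl (mkPair i j h) : DIdx n))⁻¹ *
              (FreeGroup.of (Sum.inr k : DIdx n))⁻¹)}

/-- The group `G_{n,D}^2`. -/
abbrev GnD2 (n : ℕ) := PresentedGroup (gnD2Rels n)

/-- The generator `a_{ij}` of `G_{n,D}^2`. -/
def AD {n : ℕ} (i j : Fin n) (h : i ≠ j) : GnD2 n := PresentedGroup.of (Sum.inl (mkPair i j h))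

/-- The generator `τ_i` of `G_{n,D}^2`. -/
def T {n : ℕ} (i : Fin n) : GnD2 n := PresentedGroup.of (Sum.inr i)

/-- The number of occurrences of `τ_i` (with either sign) in a word over the alphabet of
`G_{n,D}^2`. -/
def tauCount {n : ℕ} (i : Fin n) (L : List (DIdx n × Bool)) : ℕ :=
  L.countP (fun p => p.1 = Sum.inr i)

/-- The image of a word in `G_{n,D}^2`. -/
def mkD (n : ℕ) (L : List (DIdx n × Bool)) : GnD2 n :=
  PresentedGroup.mk (gnD2Rels n) (FreeGroup.mk L)

/-- The word-level map `χ`: reading a word over the alphabet of `G_{n,D}^2` from left to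
right (and keeping, for each strand `i`, the running parity `N i` of the number of `τ_i`'s
seen so far), each crossing letter `a_{ij}` is sent to `a_{ij}^{N i + N j}` in `G_{n,P}^2`
and the `τ`'s are dropped. -/
def chiWord (n : ℕ) : List (DIdx n × Bool) → (Fin n → ZMod 2) → GnP2 n
  | [], _ => 1
  | (Sum.inl s, _) :: L, N =>
      PresentedGroup.of (s, ∑ x ∈ s.1, N x) * chiWord n L N
  | (Sum.inr i, _) :: L, N =>
      chiWord n L (Function.update N i (N i + 1))

/-!
Parity vectors `w ∈ (ℤ/2)^n` act on `G_{n,P}^2` by adding `∑_{y ∈ s} w y` to the parity of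
`a_s^ε`, and `a_s ↦ a_s^0`, `τ_i ↦ e_i` gives an isomorphism
`G_{n,D}^2 ≅ G_{n,P}^2 ⋊ (ℤ/2)^n` with inverse `(β, w) ↦ η(β) ∏ τ_i^{w i}`. Both `η` and this
inverse exist because conjugating `η(a_s^ε)` by `∏ τ_i^{w i}` gives
`η(a_s^{ε + ∑_{y ∈ s} w y})`: parities with even sum on a triangle have the form
`ε_{ab} = w a + w b`, so every relation of `G_{n,P}^2` is carried by `η` to a `τ`-conjugate of
a relation of `G_n^2`.
Under the isomorphism `η` becomes the inclusion of the first factor, the second coordinate of a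
word counts its `τ_i` mod 2, and its first coordinate, shifted by the running parities, is `χ`.
-/

@[simp]
lemma PresentedGroup.mk_freeGroup_of {α : Type*} {rels : Set (FreeGroup α)} (x : α) :
    PresentedGroup.mk rels (FreeGroup.of x) = PresentedGroup.of x := rfl

lemma ZMod.two_eq_zero_or_one (z : ZMod 2) : z = 0 ∨ z = 1 := by revert z; decide

lemma ZMod.two_pi_add_self {ι : Type*} (v : ι → ZMod 2) : v + v = 0 :=
  funext fun i => CharTwo.add_self_eq_zero (v i)

lemma Function.update_apply_add_eq_add_single {ι M : Type*} [DecidableEq ι] [AddMonoid M]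
    (f : ι → M) (i : ι) (a : M) : Function.update f i (f i + a) = f + Pi.single i a := by
  ext x
  rcases eq_or_ne x i with rfl | hx <;> simp [*]

namespace PairIdx

variable {n : ℕ}

lemma exists_eq_mkPair (s : PairIdx n) : ∃ (i j : Fin n) (h : i ≠ j), s = mkPair i j h := by
  obtain ⟨i, j, h, hs⟩ := Finset.card_eq_two.mp s.2
  exact ⟨i, j, h, Subtype.ext hs⟩

@[simp]
lemma mem_mkPair {i j x : Fin n} {h : i ≠ j} : x ∈ (mkPair i j h).1 ↔ x = i ∨ x = j := by
  simp [mkPair]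

def rep (s : PairIdx n) : Fin n := s.1.min' (Finset.card_pos.mp (by rw [s.2]; norm_num))

lemma rep_mem (s : PairIdx n) : s.rep ∈ s.1 := Finset.min'_mem _ _

end PairIdx

namespace GnP2

open PresentedGroup

variable {n : ℕ}

lemma of_mul_self (s : PairIdx n) (ε : ZMod 2) :
    (of (s, ε) : GnP2 n) * of (s, ε) = 1 := by
  obtain ⟨i, j, h, rfl⟩ := s.exists_eq_mkPair
  simpa using one_of_mem (rels := gnP2Rels n) (Or.inl ⟨i, j, h, ε, rfl⟩)

lemma commute_of {i j k l : Fin n} (hij : i ≠ j) (hkl : k ≠ l) (hik : i ≠ k) (hil : i ≠ l)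
    (hjk : j ≠ k) (hjl : j ≠ l) (ε δ : ZMod 2) :
    Commute (of (mkPair i j hij, ε) : GnP2 n) (of (mkPair k l hkl, δ)) := by
  rw [← commutatorElement_eq_one_iff_commute, commutatorElement_def]
  simpa using one_of_mem (rels := gnP2Rels n)
    (Or.inr (Or.inl ⟨i, j, k, l, hij, hkl, ε, δ, hik, hil, hjk, hjl, rfl⟩))

lemma of_triple {i j k : Fin n} (hij : i ≠ j) (hik : i ≠ k) (hjk : j ≠ k)
    {εij εik εjk : ZMod 2} (hsum : εij + εik + εjk = 0) :
    (of (mkPair i j hij, εij) : GnP2 n) * of (mkPair i k hik, εik) * of (mkPair j k hjk, εjk) =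
      of (mkPair j k hjk, εjk) * of (mkPair i k hik, εik) * of (mkPair i j hij, εij) := by
  rw [← mul_inv_eq_one]
  simpa using one_of_mem (rels := gnP2Rels n)
    (Or.inr (Or.inr ⟨i, j, k, hij, hik, hjk, εij, εik, εjk, hsum, rfl⟩))

end GnP2

namespace GnD2

open PresentedGroup Multiplicative

variable {n : ℕ}

def cross (s : PairIdx n) : GnD2 n := of (Sum.inl s)

lemma AD_eq_cross {i j : Fin n} (h : i ≠ j) : AD i j h = cross (mkPair i j h) := rfl

lemma of_mul_self (x : DIdx n) : (of x : GnD2 n) * of x = 1 := by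
  rcases x with s | i
  · obtain ⟨i, j, h, rfl⟩ := s.exists_eq_mkPair
    simpa using one_of_mem (rels := gnD2Rels n) (Or.inl ⟨i, j, h, rfl⟩)
  · simpa using
      one_of_mem (rels := gnD2Rels n) (Or.inr (Or.inr (Or.inr (Or.inl ⟨i, rfl⟩))))

lemma of_inv (x : DIdx n) : (of x : GnD2 n)⁻¹ = of x :=
  inv_eq_of_mul_eq_one_right (of_mul_self x)

lemma T_mul_self (i : Fin n) : T i * T i = 1 := of_mul_self _

lemma T_inv (i : Fin n) : (T i)⁻¹ = T i := of_inv _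

lemma commute_cross {i j k l : Fin n} (hij : i ≠ j) (hkl : k ≠ l) (hik : i ≠ k) (hil : i ≠ l)
    (hjk : j ≠ k) (hjl : j ≠ l) :
    Commute (cross (mkPair i j hij)) (cross (mkPair k l hkl)) := by
  rw [← commutatorElement_eq_one_iff_commute, commutatorElement_def]
  simpa [cross, T] using one_of_mem (rels := gnD2Rels n)
    (Or.inr (Or.inl ⟨i, j, k, l, hij, hkl, hik, hil, hjk, hjl, rfl⟩))

lemma cross_triple {i j k : Fin n} (hij : i ≠ j) (hik : i ≠ k) (hjk : j ≠ k) :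
    cross (mkPair i j hij) * cross (mkPair i k hik) * cross (mkPair j k hjk) =
      cross (mkPair j k hjk) * cross (mkPair i k hik) * cross (mkPair i j hij) := by
  rw [← mul_inv_eq_one]
  simpa [cross, T] using one_of_mem (rels := gnD2Rels n)
    (Or.inr (Or.inr (Or.inl ⟨i, j, k, hij, hik, hjk, rfl⟩)))

lemma commute_T (i j : Fin n) : Commute (T i) (T j) := by
  rw [← commutatorElement_eq_one_iff_commute, commutatorElement_def]
  simpa [cross, T] using one_of_mem (rels := gnD2Rels n)
    (Or.inr (Or.inr (Or.inr (Or.inr (Or.inl ⟨i, j, rfl⟩)))))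

lemma T_T_cross_T_T {i j : Fin n} (h : i ≠ j) :
    T i * T j * cross (mkPair i j h) * T j * T i = cross (mkPair i j h) := by
  rw [← mul_inv_eq_one]
  simpa [cross, T] using one_of_mem (rels := gnD2Rels n)
    (Or.inr (Or.inr (Or.inr (Or.inr (Or.inr (Or.inl ⟨i, j, h, rfl⟩))))))

lemma commute_cross_T {s : PairIdx n} {k : Fin n} (hk : k ∉ s.1) : Commute (cross s) (T k) := by
  obtain ⟨i, j, h, rfl⟩ := s.exists_eq_mkPair
  simp only [PairIdx.mem_mkPair, not_or] at hk
  rw [← commutatorElement_eq_one_iff_commute, commutatorElement_def]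
  simpa [cross, T] using one_of_mem (rels := gnD2Rels n)
    (Or.inr (Or.inr (Or.inr (Or.inr (Or.inr (Or.inr ⟨i, j, k, h, hk.1, hk.2, rfl⟩))))))

lemma T_cross_T_eq {s : PairIdx n} {x y : Fin n} (hx : x ∈ s.1) (hy : y ∈ s.1) :
    T x * cross s * T x = T y * cross s * T y := by
  obtain ⟨i, j, h, rfl⟩ := s.exists_eq_mkPair
  have key : T i * cross (mkPair i j h) * T i = T j * cross (mkPair i j h) * T j := by
    conv_lhs => rw [← T_T_cross_T_T h]
    simp only [← mul_assoc, T_mul_self, one_mul]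
    simp only [mul_assoc, T_mul_self, mul_one]
  simp only [PairIdx.mem_mkPair] at hx hy
  rcases hx with rfl | rfl <;> rcases hy with rfl | rfl
  exacts [rfl, key, key.symm, rfl]


def tauPow (i : Fin n) : Multiplicative (ZMod 2) →* GnD2 n where
  toFun ε := T i ^ ε.toAdd.val
  map_one' := pow_zero _
  map_mul' a b := by
    rw [toAdd_mul]
    rcases ZMod.two_eq_zero_or_one a.toAdd with ha | ha <;>
      rcases ZMod.two_eq_zero_or_one b.toAdd with hb | hb <;>
      simp [ha, hb, ZMod.val_one, show (1 + 1 : ZMod 2) = 0 from rfl, T_mul_self]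

lemma tauPow_one (i : Fin n) : tauPow i (ofAdd 1) = T i := pow_one _

lemma commute_T_tauPow (i j : Fin n) (ε : Multiplicative (ZMod 2)) :
    Commute (T i) (tauPow j ε) :=
  (commute_T i j).pow_right _

lemma pairwise_commute_tauPow :
    Pairwise fun i j : Fin n => ∀ x y, Commute (tauPow i x) (tauPow j y) :=
  fun i j _ _ _ => (commute_T i j).pow_pow _ _

/-- `w ↦ ∏ i, τ_i ^ (w i)` for a parity vector `w`. -/
def tauProd : Multiplicative (Fin n → ZMod 2) →* GnD2 n :=
  (MonoidHom.noncommPiCoprod tauPow pairwise_commute_tauPow).comp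
    (MulEquiv.funMultiplicative (Fin n) (ZMod 2)).toMonoidHom

lemma tauProd_single (i : Fin n) (ε : ZMod 2) :
    tauProd (ofAdd (Pi.single i ε)) = tauPow i (ofAdd ε) := by
  have : MulEquiv.funMultiplicative (Fin n) (ZMod 2) (ofAdd (Pi.single i ε)) =
      Pi.mulSingle i (ofAdd ε) := by
    ext j
    rcases eq_or_ne j i with rfl | hj <;> simp [*]
  simp only [tauProd, MonoidHom.coe_comp, MulEquiv.coe_toMonoidHom, Function.comp_apply, this]
  exact MonoidHom.noncommPiCoprod_mulSingle _ _ _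

end GnD2

namespace GnP2

open PresentedGroup Multiplicative GnD2

variable {n : ℕ}

/-- `η(a_s^ε)`; by `GnD2.T_cross_T_eq` the choice of the endpoint `s.rep` is immaterial. -/
def etaGen (x : PairIdx n × ZMod 2) : GnD2 n :=
  MulAut.conj (tauPow x.1.rep (ofAdd x.2)) (cross x.1)

lemma etaGen_zero (s : PairIdx n) : etaGen (s, 0) = cross s := by
  simp [etaGen]

lemma conj_T_etaGen (i : Fin n) (s : PairIdx n) (ε : ZMod 2) :
    MulAut.conj (T i) (etaGen (s, ε)) = etaGen (s, ε + ∑ y ∈ s.1, Pi.single i 1 y) := by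
  rw [Finset.sum_pi_single']
  split_ifs with hi
  · have hp : MulAut.conj (T i) (cross s) = MulAut.conj (T s.rep) (cross s) := by
      simpa [T_inv] using T_cross_T_eq hi s.rep_mem
    simp only [etaGen, ofAdd_add, map_mul, tauPow_one, MulAut.mul_apply, ← hp]
    rw [← MulAut.mul_apply, ← map_mul, (commute_T_tauPow i _ _).eq, map_mul, MulAut.mul_apply]
  · have hc : Commute (T i) (etaGen (s, ε)) :=
      ((commute_T_tauPow _ _ _).mul_right (commute_cross_T hi).symm).mul_right
        (commute_T_tauPow _ _ _).inv_right
    rw [add_zero, MulAut.conj_apply, hc.mul_inv_cancel]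

lemma etaGen_one {s : PairIdx n} {i : Fin n} (hi : i ∈ s.1) :
    etaGen (s, 1) = T i * cross s * T i := by
  have h := conj_T_etaGen i s 0
  rw [etaGen_zero, Finset.sum_pi_single', if_pos hi, zero_add] at h
  rw [← h, MulAut.conj_apply, T_inv]

lemma conj_tauProd_etaGen (w : Fin n → ZMod 2) (s : PairIdx n) (ε : ZMod 2) :
    MulAut.conj (tauProd (ofAdd w)) (etaGen (s, ε)) = etaGen (s, ε + ∑ y ∈ s.1, w y) := by
  induction w using Pi.single_induction generalizing ε with
  | zero => simp
  | add v w hv hw =>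
    rw [ofAdd_add, map_mul, map_mul, MulAut.mul_apply, hw, hv]
    simp only [Pi.add_apply, Finset.sum_add_distrib]
    ring_nf
  | single i m =>
    rcases ZMod.two_eq_zero_or_one m with rfl | rfl
    · simp
    · rw [tauProd_single, tauPow_one, conj_T_etaGen]

lemma etaGen_eq_conj {w : Fin n → ZMod 2} {s : PairIdx n} {ε : ZMod 2}
    (hw : ∑ y ∈ s.1, w y = ε) : etaGen (s, ε) = MulAut.conj (tauProd (ofAdd w)) (cross s) := by
  rw [← etaGen_zero, conj_tauProd_etaGen, zero_add, hw]

lemma etaGen_rels : ∀ r ∈ gnP2Rels n, FreeGroup.lift etaGen r = 1 := by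
  rintro r (⟨i, j, h, ε, rfl⟩ | ⟨i, j, k, l, hij, hkl, ε, δ, hik, hil, hjk, hjl, rfl⟩ |
    ⟨i, j, k, hij, hik, hjk, εij, εik, εjk, hsum, rfl⟩)
  · simp only [map_mul, FreeGroup.lift_apply_of]
    rw [etaGen, ← map_mul, cross, GnD2.of_mul_self, map_one]
  · set s := mkPair i j hij
    set t := mkPair k l hkl
    have hs : s.rep ∉ t.1 := by
      rcases PairIdx.mem_mkPair.1 s.rep_mem with h | h <;> simp [t, *]
    have ht : t.rep ∉ s.1 := by
      rcases PairIdx.mem_mkPair.1 t.rep_mem with h | h <;> simp [s, Ne.symm, *]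
    set w : Fin n → ZMod 2 := Pi.single s.rep ε + Pi.single t.rep δ
    have hws : ∑ y ∈ s.1, w y = ε := by
      simp [w, Finset.sum_add_distrib, Finset.sum_pi_single', s.rep_mem, ht]
    have hwt : ∑ y ∈ t.1, w y = δ := by
      simp [w, Finset.sum_add_distrib, Finset.sum_pi_single', t.rep_mem, hs]
    simp only [map_mul, map_inv, FreeGroup.lift_apply_of]
    rw [etaGen_eq_conj hws, etaGen_eq_conj hwt, ← commutatorElement_def,
      commutatorElement_eq_one_iff_commute]
    exact (commute_cross hij hkl hik hil hjk hjl).map _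
  · set w : Fin n → ZMod 2 := Pi.single j εij + Pi.single k εik
    have hεjk : εij + εik = εjk := by
      revert hsum; revert εij εik εjk; decide
    have hw {a b : Fin n} (hab : a ≠ b) : ∑ y ∈ (mkPair a b hab).1, w y = w a + w b :=
      Finset.sum_pair hab
    simp only [map_mul, map_inv, FreeGroup.lift_apply_of]
    rw [mul_inv_eq_one, etaGen_eq_conj (w := w) (by rw [hw]; simp [w, hij, hik, hjk.symm]),
      etaGen_eq_conj (w := w) (by rw [hw]; simp [w, hij, hik, hjk]),
      etaGen_eq_conj (w := w) (by rw [hw]; simp [w, hjk, hεjk])]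
    simp only [← map_mul]
    rw [cross_triple]


/-- The homomorphism `η`. -/
def toGnD2 : GnP2 n →* GnD2 n := toGroup etaGen_rels

lemma toGnD2_of (x : PairIdx n × ZMod 2) : toGnD2 (of x) = etaGen x := toGroup.of etaGen_rels

lemma shift_rels (v : Fin n → ZMod 2) :
    ∀ r ∈ gnP2Rels n, FreeGroup.lift (fun x : PairIdx n × ZMod 2 =>
      (of (x.1, x.2 + ∑ y ∈ x.1.1, v y) : GnP2 n)) r = 1 := by
  rintro r (⟨i, j, h, ε, rfl⟩ | ⟨i, j, k, l, hij, hkl, ε, δ, hik, hil, hjk, hjl, rfl⟩ |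
    ⟨i, j, k, hij, hik, hjk, εij, εik, εjk, hsum, rfl⟩)
  · simpa using of_mul_self _ _
  · simp only [map_mul, map_inv, FreeGroup.lift_apply_of]
    rw [← commutatorElement_def, commutatorElement_eq_one_iff_commute]
    exact commute_of hij hkl hik hil hjk hjl _ _
  · simp only [map_mul, map_inv, FreeGroup.lift_apply_of]
    rw [mul_inv_eq_one]
    refine of_triple hij hik hjk ?_
    simp only [Finset.sum_pair, mkPair, hij, hik, hjk, ne_eq, not_false_eq_true]
    revert hsum
    generalize v i = a; generalize v j = b; generalize v k = c
    revert εij εik εjk a b c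
    decide

def shift (v : Fin n → ZMod 2) : GnP2 n →* GnP2 n := toGroup (shift_rels v)

lemma shift_of (v : Fin n → ZMod 2) (s : PairIdx n) (ε : ZMod 2) :
    shift v (of (s, ε)) = of (s, ε + ∑ y ∈ s.1, v y) :=
  toGroup.of (shift_rels v)

lemma shift_zero : shift (n := n) 0 = MonoidHom.id _ :=
  ext fun ⟨s, ε⟩ => by simp [shift_of]

lemma shift_add (v w : Fin n → ZMod 2) : shift (v + w) = (shift v).comp (shift w) :=
  ext fun ⟨s, ε⟩ => by
    simp only [shift_of, MonoidHom.comp_apply, Pi.add_apply, Finset.sum_add_distrib]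
    ring_nf

lemma shift_comp_self (v : Fin n → ZMod 2) : (shift v).comp (shift v) = MonoidHom.id _ := by
  rw [← shift_add, ZMod.two_pi_add_self, shift_zero]

def parityShift : Multiplicative (Fin n → ZMod 2) →* MulAut (GnP2 n) where
  toFun v := (shift v.toAdd).toMulEquiv _ (shift_comp_self _) (shift_comp_self _)
  map_one' := MulEquiv.ext fun x => by simp [shift_zero]
  map_mul' v w := MulEquiv.ext fun x => by simp [shift_add]

@[simp]
lemma parityShift_apply (v : Fin n → ZMod 2) (x : GnP2 n) :
    parityShift (ofAdd v) x = shift v x :=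
  rfl

end GnP2

namespace GnD2

open PresentedGroup Multiplicative SemidirectProduct

variable {n : ℕ}

abbrev ParitySemidirect (n : ℕ) :=
  GnP2 n ⋊[GnP2.parityShift] Multiplicative (Fin n → ZMod 2)

def toSemidirectGen : DIdx n → ParitySemidirect n
  | .inl s => inl (of (s, 0))
  | .inr i => inr (ofAdd (Pi.single i 1))

lemma toSemidirectGen_rels : ∀ r ∈ gnD2Rels n, FreeGroup.lift toSemidirectGen r = 1 := by
  have hsq (v : Fin n → ZMod 2) : ofAdd v * ofAdd v = 1 := by
    rw [← ofAdd_add, ZMod.two_pi_add_self, ofAdd_zero]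
  rintro r (⟨i, j, h, rfl⟩ | ⟨i, j, k, l, hij, hkl, hik, hil, hjk, hjl, rfl⟩ |
    ⟨i, j, k, hij, hik, hjk, rfl⟩ | ⟨i, rfl⟩ | ⟨i, j, rfl⟩ | ⟨i, j, h, rfl⟩ |
    ⟨i, j, k, h, hki, hkj, rfl⟩) <;>
    simp only [map_mul, map_inv, FreeGroup.lift_apply_of, toSemidirectGen]
  · rw [← map_mul, GnP2.of_mul_self, map_one]
  · rw [← commutatorElement_def, commutatorElement_eq_one_iff_commute]
    exact (GnP2.commute_of hij hkl hik hil hjk hjl _ _).map _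
  · rw [mul_inv_eq_one]
    simp only [← map_mul]
    rw [GnP2.of_triple hij hik hjk (by simp)]
  · rw [← map_mul, hsq, map_one]
  · rw [← commutatorElement_def, commutatorElement_eq_one_iff_commute]
    exact (Commute.all _ _).map _
  · refine SemidirectProduct.ext ?_ ?_
    · simp [GnP2.shift_of, CharTwo.add_self_eq_zero]
    · simp only [SemidirectProduct.mul_right, right_inr, right_inl, SemidirectProduct.inv_right,
        inv_one, mul_one, mul_assoc (ofAdd (Pi.single i 1)), hsq, one_right]
  · ext <;> simp [GnP2.shift_of, hki, hkj]


def toSemidirect : GnD2 n →* ParitySemidirect n := toGroup toSemidirectGen_rels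

lemma toSemidirect_of (x : DIdx n) : toSemidirect (of x) = toSemidirectGen x :=
  toGroup.of toSemidirectGen_rels

def ofSemidirect : ParitySemidirect n →* GnD2 n :=
  lift GnP2.toGnD2 tauProd fun w => ext fun ⟨s, ε⟩ => by
    rw [← ofAdd_toAdd w]
    simp only [MonoidHom.comp_apply, MulEquiv.coe_toMonoidHom, GnP2.parityShift_apply,
      GnP2.shift_of, GnP2.toGnD2_of, GnP2.conj_tauProd_etaGen]

lemma ofSemidirect_comp_toSemidirect : ofSemidirect.comp toSemidirect = MonoidHom.id (GnD2 n) :=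
  ext fun x => by
    rcases x with s | i <;>
      simp [toSemidirect_of, toSemidirectGen, ofSemidirect, GnP2.toGnD2_of, GnP2.etaGen_zero,
        tauProd_single, tauPow_one, cross, T]

lemma toSemidirect_injective : Function.Injective (toSemidirect (n := n)) :=
  Function.LeftInverse.injective (g := ofSemidirect) fun x =>
    DFunLike.congr_fun ofSemidirect_comp_toSemidirect x

lemma toSemidirect_tauProd (w : Fin n → ZMod 2) :
    toSemidirect (tauProd (ofAdd w)) = inr (ofAdd w) := by
  induction w using Pi.single_induction with
  | zero => simp
  | add v w hv hw => rw [ofAdd_add, map_mul, map_mul, hv, hw, map_mul]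
  | single i m =>
    rcases ZMod.two_eq_zero_or_one m with rfl | rfl
    · simp
    · rw [tauProd_single, tauPow_one, T, toSemidirect_of, toSemidirectGen]

lemma toSemidirect_toGnD2 (β : GnP2 n) : toSemidirect (GnP2.toGnD2 β) = inl β := by
  suffices h : toSemidirect.comp GnP2.toGnD2 = inl from DFunLike.congr_fun h β
  refine ext fun ⟨s, ε⟩ => ?_
  have hw : ∑ y ∈ s.1, Pi.single s.rep ε y = ε := by simp [Finset.sum_pi_single', s.rep_mem]
  rw [MonoidHom.comp_apply, GnP2.toGnD2_of, GnP2.etaGen_eq_conj hw, MulAut.conj_apply, map_mul,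
    map_mul, map_inv, toSemidirect_tauProd, cross, toSemidirect_of, toSemidirectGen, ← map_inv,
    ← inl_aut, GnP2.parityShift_apply, GnP2.shift_of, zero_add, hw]


lemma mkD_nil : mkD n [] = 1 := map_one _

lemma mkD_cons (x : DIdx n) (b : Bool) (L : List (DIdx n × Bool)) :
    mkD n ((x, b) :: L) = of x * mkD n L := by
  rw [mkD, mkD, ← List.singleton_append, ← FreeGroup.mul_mk, map_mul]
  cases b
  · rw [← of_inv]
    rfl
  · rfl

lemma chiWord_eq_shift_left (L : List (DIdx n × Bool)) (N : Fin n → ZMod 2) :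
    chiWord n L N = GnP2.shift N (toSemidirect (mkD n L)).left := by
  induction L generalizing N with
  | nil => simp [chiWord, mkD_nil]
  | cons x L ih =>
    obtain ⟨s | i, b⟩ := x
    · simp [chiWord, mkD_cons, toSemidirect_of, toSemidirectGen, GnP2.shift_of, ih]
    · simp [chiWord, mkD_cons, toSemidirect_of, toSemidirectGen, ih,
        Function.update_apply_add_eq_add_single, GnP2.shift_add]

lemma right_toSemidirect_mkD (L : List (DIdx n × Bool)) :
    (toSemidirect (mkD n L)).right = ofAdd fun i => (tauCount i L : ZMod 2) := by
  induction L with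
  | nil => simp [mkD_nil, tauCount, ← Pi.zero_def]
  | cons x L ih =>
    obtain ⟨s | i, b⟩ := x
    · simp [mkD_cons, toSemidirect_of, toSemidirectGen, ih, tauCount]
    · rw [mkD_cons, map_mul, SemidirectProduct.mul_right, ih, toSemidirect_of, toSemidirectGen,
        right_inr, ← ofAdd_add]
      congr 1
      ext x
      simp [tauCount, List.countP_cons, Pi.single_apply, eq_comm, add_comm]


lemma toSemidirect_mkD_of_even {L : List (DIdx n × Bool)} (hL : ∀ i, Even (tauCount i L)) :
    toSemidirect (mkD n L) = inl (chiWord n L 0) := by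
  refine SemidirectProduct.ext ?_ ?_
  · rw [chiWord_eq_shift_left, GnP2.shift_zero, left_inl, MonoidHom.id_apply]
  · rw [right_toSemidirect_mkD, right_inl, ← ofAdd_zero]
    exact congrArg ofAdd (funext fun i => (ZMod.natCast_eq_zero_iff_even).2 (hL i))

lemma toGnD2_chiWord {L : List (DIdx n × Bool)} (hL : ∀ i, Even (tauCount i L)) :
    GnP2.toGnD2 (chiWord n L 0) = mkD n L :=
  toSemidirect_injective (by rw [toSemidirect_toGnD2, toSemidirect_mkD_of_even hL])

lemma even_tauCount_of_mkD_eq {L : List (DIdx n × Bool)} {β : GnP2 n}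
    (h : mkD n L = GnP2.toGnD2 β) (i : Fin n) : Even (tauCount i L) := by
  have hr := right_toSemidirect_mkD L
  rw [h, toSemidirect_toGnD2, right_inl, ← ofAdd_zero] at hr
  exact (ZMod.natCast_eq_zero_iff_even).1 (congrFun (ofAdd.injective hr) i).symm

lemma chiWord_of_mkD_eq {L : List (DIdx n × Bool)} {β : GnP2 n}
    (h : mkD n L = GnP2.toGnD2 β) : chiWord n L 0 = β := by
  rw [chiWord_eq_shift_left, h, toSemidirect_toGnD2, GnP2.shift_zero, left_inl,
    MonoidHom.id_apply]

end GnD2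

open GnD2 in
theorem stmt9_general (n : ℕ) :
    ∃ η : GnP2 n →* GnD2 n,
      (∀ (i j : Fin n) (h : i < j),
        η (AP i j h.ne 0) = AD i j h.ne ∧
        η (AP i j h.ne 1) = T i * AD i j h.ne * T i) ∧
      Function.Injective η ∧
      Set.range η =
        {β : GnD2 n | ∀ L : List (DIdx n × Bool),
          mkD n L = β → ∀ i : Fin n, Even (tauCount i L)} ∧
      (∀ (β : GnP2 n) (L : List (DIdx n × Bool)),
        mkD n L = η β → chiWord n L (fun _ => 0) = β) ∧
      (∀ L : List (DIdx n × Bool),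
        (∀ i : Fin n, Even (tauCount i L)) →
        η (chiWord n L (fun _ => 0)) = mkD n L) := by
  refine ⟨GnP2.toGnD2, fun i j h => ⟨?_, ?_⟩, fun a b hab => ?_, ?_,
    fun β L => chiWord_of_mkD_eq, fun L => toGnD2_chiWord⟩
  · rw [AP, GnP2.toGnD2_of, GnP2.etaGen_zero, AD_eq_cross]
  · rw [AP, GnP2.toGnD2_of, GnP2.etaGen_one (PairIdx.mem_mkPair.2 (Or.inl rfl)), AD_eq_cross]
  · simpa [toSemidirect_toGnD2] using congrArg toSemidirect hab
  · ext β
    refine ⟨?_, fun hβ => ?_⟩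
    · rintro ⟨γ, rfl⟩ L hL
      exact even_tauCount_of_mkD_eq hL
    · obtain ⟨x, rfl⟩ := PresentedGroup.mk_surjective _ β
      have hx : mkD n x.toWord = PresentedGroup.mk _ x := congrArg _ x.mk_toWord
      exact ⟨_, (toGnD2_chiWord (hβ _ hx)).trans hx⟩

/-- the image of `G_{n,P}^2` under `η` is (isomorphic to) `H_{n,D}^2`:
`η` is injective, its range is exactly the subgroup `H_{n,D}^2` of elements all of whose
representing words have an even number of each `τ_i`, and `χ` is a two-sided inverse:
`χ ∘ η = id` and `η ∘ χ = id`. -/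
theorem stmt9 (n : ℕ) (hn : 2 < n) :
    ∃ η : GnP2 n →* GnD2 n,
      (∀ (i j : Fin n) (h : i < j),
        η (AP i j h.ne 0) = AD i j h.ne ∧
        η (AP i j h.ne 1) = T i * AD i j h.ne * T i) ∧
      Function.Injective η ∧
      Set.range η =
        {β : GnD2 n | ∀ L : List (DIdx n × Bool),
          mkD n L = β → ∀ i : Fin n, Even (tauCount i L)} ∧
      (∀ (β : GnP2 n) (L : List (DIdx n × Bool)),
        mkD n L = η β → chiWord n L (fun _ => 0) = β) ∧
      (∀ L : List (DIdx n × Bool),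
        (∀ i : Fin n, Even (tauCount i L)) →
        η (chiWord n L (fun _ => 0)) = mkD n L) :=
  stmt9_general n
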